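/- arXiv:0903.1174 — 2 statements merged into one kernel-verified Lean document; each statement's English description precedes it below -/
import Mathlib

section
/- Let 0 ≤ s < t with t - s > 1 and let u > 0. Then for all r ∈ [0, u], q_{s,t}(r)·q_{s,t}(u - r) ≤ (t - s)·q_{s,t}(u), where q_{s,t}(v) = (e^{-sv} - e^{-tv})/(1 - e^{-v}) for v ≠ 0 and q_{s,t}(0) = t - s. -/
noncomputable def q (s t v : ℝ) : ℝ :=
  if v = 0 then t - s else (Real.exp (-s * v) - Real.exp (-t * v)) / (1 - Real.exp (-v))

open Real Set

/-!
Since `exp a - exp b = 2 exp ((a + b) / 2) sinh ((a - b) / 2)`, with `n = t - s` we have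
`q s t v = exp (-(s + t - 1) v / 2) * S (v / 2)` where `S y = sinh (n y) / sinh y` and `S 0 = n`.
The exponential factors cancel, so the claim is `S x * S y ≤ S 0 * S (x + y)` for `x, y ≥ 0`.
This holds because `log S` is convex on `[0, ∞)` for `n ≥ 1`: its second derivative is
`1 / sinh y ^ 2 - n ^ 2 / sinh (n y) ^ 2 ≥ 0`, as `sinh y / y ≤ sinh (n y) / (n y)` by convexity
of `sinh` on `[0, ∞)`.
-/

theorem ConvexOn.map_add_map_le_map_zero_add_map_add {𝕜 β : Type*} [Field 𝕜] [LinearOrder 𝕜]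
    [IsStrictOrderedRing 𝕜] [AddCommMonoid β] [PartialOrder β] [IsOrderedAddMonoid β]
    [Module 𝕜 β] {s : Set 𝕜} {f : 𝕜 → β} (hf : ConvexOn 𝕜 s f) (h0 : 0 ∈ s) {a b : 𝕜}
    (ha : 0 ≤ a) (hb : 0 ≤ b) (hab : a + b ∈ s) : f a + f b ≤ f 0 + f (a + b) := by
  rcases (add_nonneg ha hb).eq_or_lt with hsum | hsum
  · obtain rfl : a = 0 := by linarith
    obtain rfl : b = 0 := by linarith
    simp
  have hθ : b / (a + b) + a / (a + b) = 1 := by field_simp; ring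
  have hθ' : a / (a + b) + b / (a + b) = 1 := by rw [add_comm, hθ]
  have fa := hf.2 h0 hab (by positivity) (by positivity) hθ
  have fb := hf.2 h0 hab (by positivity) (by positivity) hθ'
  rw [smul_zero, zero_add, smul_eq_mul, div_mul_cancel₀ _ hsum.ne'] at fa fb
  calc f a + f b
      ≤ (b / (a + b)) • f 0 + (a / (a + b)) • f (a + b)
        + ((a / (a + b)) • f 0 + (b / (a + b)) • f (a + b)) := add_le_add fa fb
    _ = f 0 + f (a + b) := by
      rw [add_add_add_comm, ← add_smul, add_comm (_ • f (a + b)), ← add_smul, hθ, one_smul,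
        one_smul]

theorem Differentiable.continuous_dslope {𝕜 E : Type*} [NontriviallyNormedField 𝕜]
    [NormedAddCommGroup E] [NormedSpace 𝕜 E] {f : 𝕜 → E} (hf : Differentiable 𝕜 f) (a : 𝕜) :
    Continuous (dslope f a) := by
  refine continuous_iff_continuousAt.2 fun b ↦ ?_
  rcases eq_or_ne b a with rfl | hb
  · exact continuousAt_dslope_same.2 (hf b)
  · exact (continuousAt_dslope_of_ne hb).2 (hf b).continuousAt

namespace Real

theorem convexOn_sinh : ConvexOn ℝ (Ici 0) sinh := by
  refine convexOn_of_hasDerivWithinAt2_nonneg (convex_Ici 0) continuous_sinh.continuousOn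
    (fun x _ ↦ (hasDerivAt_sinh x).hasDerivWithinAt)
    (fun x _ ↦ (hasDerivAt_cosh x).hasDerivWithinAt) fun x hx ↦ ?_
  rw [interior_Ici] at hx
  exact sinh_nonneg_iff.2 (le_of_lt hx)

theorem mul_sinh_le_sinh_mul {n y : ℝ} (hn : 1 ≤ n) (hy : 0 ≤ y) : n * sinh y ≤ sinh (n * y) := by
  rcases hy.eq_or_lt with rfl | hy
  · simp
  have hny : y ≤ n * y := le_mul_of_one_le_left hy.le hn
  have hslope := convexOn_sinh.slope_mono self_mem_Ici ⟨hy.le, hy.ne'⟩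
    ⟨hy.le.trans hny, (mul_pos (by linarith) hy).ne'⟩ hny
  simp only [slope_def_field, sinh_zero, sub_zero] at hslope
  rw [div_le_div_iff₀ hy (by positivity)] at hslope
  nlinarith

theorem hasDerivAt_cosh_div_sinh {y : ℝ} (hy : sinh y ≠ 0) :
    HasDerivAt (fun y ↦ cosh y / sinh y) (-1 / sinh y ^ 2) y := by
  refine ((hasDerivAt_cosh y).div (hasDerivAt_sinh y) hy).congr_deriv ?_
  rw [← sq, ← sq, cosh_sq]; ring

theorem exp_sub_exp (a b : ℝ) : exp a - exp b = 2 * exp ((a + b) / 2) * sinh ((a - b) / 2) := by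
  rw [sinh_eq, mul_comm 2, mul_assoc, mul_div_cancel₀ _ two_ne_zero, mul_sub, ← exp_add,
    ← exp_add]
  ring_nf

theorem hasDerivAt_sinh_const_mul (n y : ℝ) :
    HasDerivAt (fun y ↦ sinh (n * y)) (cosh (n * y) * n) y :=
  (hasDerivAt_sinh (n * y)).comp y (by simpa using (hasDerivAt_id y).const_mul n)

end Real

noncomputable def sinhRatio (n y : ℝ) : ℝ := if y = 0 then n else sinh (n * y) / sinh y

section sinhRatio

variable {n x y : ℝ}

theorem sinhRatio_zero : sinhRatio n 0 = n := if_pos rfl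

theorem sinhRatio_of_ne_zero (hy : y ≠ 0) : sinhRatio n y = sinh (n * y) / sinh y := if_neg hy

theorem sinhRatio_eq_dslope_div (n : ℝ) :
    sinhRatio n = fun y ↦ dslope (fun y ↦ sinh (n * y)) 0 y / dslope sinh 0 y := by
  ext y
  rcases eq_or_ne y 0 with rfl | hy
  · simp [sinhRatio_zero, dslope_same, (hasDerivAt_sinh_const_mul n 0).deriv]
  · rw [sinhRatio_of_ne_zero hy, dslope_of_ne _ hy, dslope_of_ne _ hy, slope_def_field,
      slope_def_field]
    simp only [mul_zero, sinh_zero, sub_zero]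
    field_simp [hy]

theorem continuous_sinhRatio (n : ℝ) : Continuous (sinhRatio n) := by
  rw [sinhRatio_eq_dslope_div]
  refine ((differentiable_sinh.comp (differentiable_id.const_mul n)).continuous_dslope 0).div
    (differentiable_sinh.continuous_dslope 0) fun y ↦ ?_
  rcases eq_or_ne y 0 with rfl | hy
  · simp [dslope_same]
  · rw [dslope_of_ne _ hy, slope_def_field]
    simpa [sinh_eq_zero] using hy

theorem sinhRatio_pos (hn : 0 < n) (hy : 0 ≤ y) : 0 < sinhRatio n y := by
  rcases hy.eq_or_lt with rfl | hy
  · rwa [sinhRatio_zero]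
  · rw [sinhRatio_of_ne_zero hy.ne']
    exact div_pos (sinh_pos_iff.2 (mul_pos hn hy)) (sinh_pos_iff.2 hy)

theorem hasDerivAt_log_sinhRatio (hn : 0 < n) (hy : 0 < y) :
    HasDerivAt (fun y ↦ log (sinhRatio n y)) (n * (cosh (n * y) / sinh (n * y)) - cosh y / sinh y)
      y := by
  refine (((hasDerivAt_sinh_const_mul n y).log (sinh_pos_iff.2 (mul_pos hn hy)).ne').sub
    ((hasDerivAt_sinh y).log (sinh_pos_iff.2 hy).ne')).congr_of_eventuallyEq ?_ |>.congr_deriv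
    (by ring)
  filter_upwards [Ioi_mem_nhds hy] with z (hz : 0 < z)
  rw [sinhRatio_of_ne_zero hz.ne', log_div (sinh_pos_iff.2 (mul_pos hn hz)).ne'
    (sinh_pos_iff.2 hz).ne']
  rfl

theorem convexOn_log_sinhRatio (hn : 1 ≤ n) : ConvexOn ℝ (Ici 0) fun y ↦ log (sinhRatio n y) := by
  have hn0 : 0 < n := zero_lt_one.trans_le hn
  refine convexOn_of_hasDerivWithinAt2_nonneg (convex_Ici 0)
    ((continuous_sinhRatio n).continuousOn.log fun y hy ↦ (sinhRatio_pos hn0 hy).ne')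
    (f' := fun y ↦ n * (cosh (n * y) / sinh (n * y)) - cosh y / sinh y)
    (f'' := fun y ↦ 1 / sinh y ^ 2 - n ^ 2 / sinh (n * y) ^ 2) ?_ ?_ ?_ <;>
    simp only [interior_Ici] <;> intro y (hy : 0 < y)
  · exact (hasDerivAt_log_sinhRatio hn0 hy).hasDerivWithinAt
  · have hsinh_mul : sinh (n * y) ≠ 0 := (sinh_pos_iff.2 (mul_pos hn0 hy)).ne'
    refine ((((hasDerivAt_cosh_div_sinh hsinh_mul).comp y
      (by simpa using (hasDerivAt_id y).const_mul n)).const_mul n).sub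
      (hasDerivAt_cosh_div_sinh (sinh_pos_iff.2 hy).ne')).hasDerivWithinAt.congr_deriv ?_
    ring
  · rw [sub_nonneg, div_le_div_iff₀ (by positivity) (pow_pos (sinh_pos_iff.2 hy) 2), one_mul,
      ← mul_pow]
    exact pow_le_pow_left₀ (by positivity) (mul_sinh_le_sinh_mul hn hy.le) 2

theorem sinhRatio_mul_sinhRatio_le (hn : 1 ≤ n) (hx : 0 ≤ x) (hy : 0 ≤ y) :
    sinhRatio n x * sinhRatio n y ≤ n * sinhRatio n (x + y) := by
  have hn0 : 0 < n := zero_lt_one.trans_le hn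
  have hxy : 0 ≤ x + y := add_nonneg hx hy
  have hlog :=
    (convexOn_log_sinhRatio hn).map_add_map_le_map_zero_add_map_add self_mem_Ici hx hy hxy
  rw [sinhRatio_zero, ← log_mul (sinhRatio_pos hn0 hx).ne' (sinhRatio_pos hn0 hy).ne',
    ← log_mul hn0.ne' (sinhRatio_pos hn0 hxy).ne'] at hlog
  exact (log_le_log_iff (mul_pos (sinhRatio_pos hn0 hx) (sinhRatio_pos hn0 hy))
    (mul_pos hn0 (sinhRatio_pos hn0 hxy))).1 hlog

end sinhRatio

theorem q_eq_exp_mul_sinhRatio (s t v : ℝ) :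
    q s t v = exp (-(s + t - 1) * v / 2) * sinhRatio (t - s) (v / 2) := by
  rcases eq_or_ne v 0 with rfl | hv
  · simp [q, sinhRatio_zero]
  have hv2 : v / 2 ≠ 0 := by simpa using hv
  -- `1 = exp 0` lets `exp_sub_exp` factor the denominator as well
  rw [q, if_neg hv, sinhRatio_of_ne_zero hv2, ← exp_zero, exp_sub_exp, exp_sub_exp, exp_zero,
    show (-s * v - -t * v) / 2 = (t - s) * (v / 2) by ring, show (0 - -v) / 2 = v / 2 by ring,
    mul_div_mul_comm, mul_div_mul_left _ _ two_ne_zero, ← exp_sub]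
  congr 2
  ring

theorem q_convolution_le_general (s t u : ℝ) (h1 : 1 < t - s) (r : ℝ) (hr : r ∈ Set.Icc 0 u) :
    q s t r * q s t (u - r) ≤ (t - s) * q s t u := by
  obtain ⟨hr0, hru⟩ := hr
  have key := sinhRatio_mul_sinhRatio_le h1.le (by linarith : 0 ≤ r / 2)
    (by linarith : 0 ≤ (u - r) / 2)
  rw [← add_div, add_sub_cancel] at key
  have hexp : exp (-(s + t - 1) * r / 2) * exp (-(s + t - 1) * (u - r) / 2) =
      exp (-(s + t - 1) * u / 2) := by
    rw [← exp_add]; ring_nf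
  simp only [q_eq_exp_mul_sinhRatio]
  rw [← hexp]
  have hexp_nonneg : 0 ≤ exp (-(s + t - 1) * r / 2) * exp (-(s + t - 1) * (u - r) / 2) := by
    positivity
  linear_combination mul_le_mul_of_nonneg_left key hexp_nonneg

theorem q_convolution_le (s t u : ℝ) (hs : 0 ≤ s) (hst : s < t) (h1 : 1 < t - s)
    (hu : 0 < u) (r : ℝ) (hr : r ∈ Set.Icc 0 u) :
    q s t r * q s t (u - r) ≤ (t - s) * q s t u :=
  q_convolution_le_general s t u h1 r hr
end

section
/- Let 0 ≤ s < t with t - s < 1 and let u > 0. Then for all r ∈ [0, u], q_{s,t}(r)·q_{s,t}(u - r) ≥ (t - s)·q_{s,t}(u), where q_{s,t}(v) = (e^{-sv} - e^{-tv})/(1 - e^{-v}) for v ≠ 0 and q_{s,t}(0) = t - s. -/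
open Real Set Filter Topology

lemma Real.convexOn_sinh_Ici : ConvexOn ℝ (Ici 0) sinh :=
  MonotoneOn.convexOn_of_deriv (convex_Ici 0) continuous_sinh.continuousOn
    differentiable_sinh.differentiableOn
    (by rw [deriv_sinh]; exact cosh_strictMonoOn.monotoneOn.mono interior_subset)

lemma Real.sinh_mul_le_mul_sinh {a x : ℝ} (ha₀ : 0 ≤ a) (ha₁ : a ≤ 1) (hx : 0 ≤ x) :
    sinh (a * x) ≤ a * sinh x := by
  simpa using convexOn_sinh_Ici.2 self_mem_Ici hx (sub_nonneg.2 ha₁) ha₀ (by ring)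

lemma Real.exp_sub_one_ne_zero {x : ℝ} (hx : x ≠ 0) : exp x - 1 ≠ 0 :=
  sub_ne_zero.2 fun h => hx ((exp_eq_one_iff x).1 h)

lemma Real.one_sub_exp_neg_ne_zero {x : ℝ} (hx : x ≠ 0) : 1 - exp (-x) ≠ 0 :=
  sub_ne_zero.2 fun h => hx (neg_eq_zero.1 ((exp_eq_one_iff _).1 h.symm))

lemma ConcaveOn.map_add_map_le_of_mem_Icc {s : Set ℝ} {g : ℝ → ℝ} (hg : ConcaveOn ℝ s g)
    {x y a : ℝ} (hx : x ∈ s) (hy : y ∈ s) (ha : a ∈ Icc x y) :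
    g x + g y ≤ g a + g (x + y - a) := by
  obtain ⟨hxa, hay⟩ := ha
  rcases (hxa.trans hay).eq_or_lt with rfl | hxy
  · obtain rfl := le_antisymm hay hxa
    simp
  set μ := (a - x) / (y - x)
  have hμ₀ : 0 ≤ μ := div_nonneg (sub_nonneg.2 hxa) (sub_nonneg.2 hxy.le)
  have hμ₁ : μ ≤ 1 := div_le_one_of_le₀ (by linarith) (sub_nonneg.2 hxy.le)
  have e₁ : (1 - μ) • x + μ • y = a := by
    simp only [smul_eq_mul, μ]; field_simp; ring
  have e₂ : μ • x + (1 - μ) • y = x + y - a := by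
    simp only [smul_eq_mul, μ]; field_simp; ring
  have h₁ := hg.2 hx hy (sub_nonneg.2 hμ₁) hμ₀ (by ring)
  have h₂ := hg.2 hx hy hμ₀ (sub_nonneg.2 hμ₁) (by ring)
  rw [e₁] at h₁
  rw [e₂] at h₂
  simp only [smul_eq_mul] at h₁ h₂
  linarith

lemma HasDerivAt.tendsto_div_of_eq_zero {f g : ℝ → ℝ} {f' g' x : ℝ} (hf : HasDerivAt f f' x)
    (hg : HasDerivAt g g' x) (hfx : f x = 0) (hgx : g x = 0) (hg' : g' ≠ 0) :
    Tendsto (fun y => f y / g y) (𝓝[≠] x) (𝓝 (f' / g')) := by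
  refine ((hasDerivAt_iff_tendsto_slope.1 hf).div (hasDerivAt_iff_tendsto_slope.1 hg) hg').congr' ?_
  filter_upwards [self_mem_nhdsWithin] with y hy
  rw [Pi.div_apply, slope_def_field, slope_def_field, hfx, hgx, sub_zero, sub_zero,
    div_div_div_cancel_right₀ (sub_ne_zero.2 hy)]

lemma q_of_ne_zero {s t v : ℝ} (hv : v ≠ 0) :
    q s t v = (exp (-s * v) - exp (-t * v)) / (1 - exp (-v)) :=
  if_neg hv

lemma q_zero (s t : ℝ) : q s t 0 = t - s :=
  if_pos rfl

lemma continuous_q (s t : ℝ) : Continuous (q s t) := by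
  refine continuous_iff_continuousAt.2 fun v => ?_
  rcases eq_or_ne v 0 with rfl | hv
  · have hnum : HasDerivAt (fun v => exp (-s * v) - exp (-t * v)) (t - s) 0 := by
      refine (((hasDerivAt_id' 0).const_mul (-s)).exp.sub
        ((hasDerivAt_id' 0).const_mul (-t)).exp).congr_deriv ?_
      simp only [mul_zero, exp_zero, one_mul, mul_one]
      ring
    have hden : HasDerivAt (fun v => 1 - exp (-v)) 1 0 := by
      simpa using (hasDerivAt_id' (0 : ℝ)).neg.exp.const_sub 1
    have hlim := hnum.tendsto_div_of_eq_zero hden (by simp) (by simp) one_ne_zero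
    rw [div_one] at hlim
    rw [← continuousWithinAt_compl_self, ContinuousWithinAt, q_zero]
    exact hlim.congr' (eventually_nhdsWithin_of_forall fun w hw => (q_of_ne_zero hw).symm)
  · have hcont : ContinuousAt (fun w => (exp (-s * w) - exp (-t * w)) / (1 - exp (-w))) v :=
      by fun_prop (disch := exact one_sub_exp_neg_ne_zero hv)
    exact hcont.congr (eventually_ne_nhds hv |>.mono fun w hw => (q_of_ne_zero hw).symm)

lemma q_pos {s t : ℝ} (hst : s < t) (v : ℝ) : 0 < q s t v := by
  rcases lt_trichotomy v 0 with hv | rfl | hv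
  · rw [q_of_ne_zero hv.ne]
    exact div_pos_of_neg_of_neg (sub_neg.2 (exp_lt_exp.2 (by nlinarith)))
      (sub_neg.2 (one_lt_exp_iff.2 (by linarith)))
  · rw [q_zero]; linarith
  · rw [q_of_ne_zero hv.ne']
    exact div_pos (sub_pos.2 (exp_lt_exp.2 (by nlinarith)))
      (sub_pos.2 (exp_lt_one_iff.2 (by linarith)))

lemma q_eq_exp_mul_q_zero (s t v : ℝ) : q s t v = exp (-s * v) * q 0 (t - s) v := by
  rcases eq_or_ne v 0 with rfl | hv
  · simp [q_zero]
  · rw [q_of_ne_zero hv, q_of_ne_zero hv, mul_div_assoc', mul_sub, ← exp_add, ← exp_add]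
    ring_nf

lemma hasDerivAt_log_one_sub_exp_neg {x : ℝ} (hx : x ≠ 0) :
    HasDerivAt (fun y => log (1 - exp (-y))) (exp x - 1)⁻¹ x := by
  refine (((hasDerivAt_id' x).neg.exp.const_sub 1).log
    (one_sub_exp_neg_ne_zero hx)).congr_deriv ?_
  have hne := exp_sub_one_ne_zero hx
  simp only [Pi.neg_apply, exp_neg]
  field_simp

lemma hasDerivAt_inv_exp_sub_one {x : ℝ} (hx : x ≠ 0) :
    HasDerivAt (fun y => (exp y - 1)⁻¹) (-((2 * sinh (x / 2)) ^ 2)⁻¹) x := by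
  have hne := exp_sub_one_ne_zero hx
  refine (((hasDerivAt_exp x).sub_const 1).inv hne).congr_deriv ?_
  have hx2 : exp x = exp (x / 2) ^ 2 := by rw [← exp_nat_mul]; ring_nf
  have hne2 : exp (x / 2) ^ 2 - 1 ≠ 0 := hx2 ▸ hne
  rw [sinh_eq, exp_neg, hx2]
  field_simp

lemma concaveOn_log_q_zero {a : ℝ} (ha₀ : 0 < a) (ha₁ : a ≤ 1) :
    ConcaveOn ℝ (Ici 0) (fun v => log (q 0 a v)) := by
  refine concaveOn_of_hasDerivWithinAt2_nonpos (convex_Ici 0)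
    (f' := fun v => (exp (a * v) - 1)⁻¹ * a - (exp v - 1)⁻¹)
    (f'' := fun v => -((2 * sinh (a * v / 2)) ^ 2)⁻¹ * a * a - -((2 * sinh (v / 2)) ^ 2)⁻¹)
    ((continuous_q 0 a).continuousOn.log fun v _ => (q_pos ha₀ v).ne') ?_ ?_ ?_ <;>
  rw [interior_Ici] <;> intro v (hv : 0 < v)
  · have hav : a * v ≠ 0 := by positivity
    have hderiv := ((hasDerivAt_log_one_sub_exp_neg hav).comp v
      ((hasDerivAt_id' v).const_mul a |>.congr_deriv (mul_one a))).sub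
      (hasDerivAt_log_one_sub_exp_neg hv.ne')
    refine (hderiv.congr_of_eventuallyEq ?_).hasDerivWithinAt
    filter_upwards [Ioi_mem_nhds hv] with w (hw : 0 < w)
    have haw : a * w ≠ 0 := by positivity
    rw [q_of_ne_zero hw.ne', log_div _ (one_sub_exp_neg_ne_zero hw.ne')]
    · simp [neg_mul]
    · simpa using one_sub_exp_neg_ne_zero haw
  · have hav : a * v ≠ 0 := by positivity
    exact (((hasDerivAt_inv_exp_sub_one hav).comp v
      ((hasDerivAt_id' v).const_mul a |>.congr_deriv (mul_one a))).mul_const a).sub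
      (hasDerivAt_inv_exp_sub_one hv.ne') |>.hasDerivWithinAt
  · have hsinh : 2 * sinh (a * v / 2) ≤ a * (2 * sinh (v / 2)) := by
      have := sinh_mul_le_mul_sinh ha₀.le ha₁ (by positivity : 0 ≤ v / 2)
      rw [mul_div_assoc]; linarith
    have hpos : 0 < 2 * sinh (a * v / 2) := by
      have : 0 < sinh (a * v / 2) := sinh_pos_iff.2 (by positivity)
      linarith
    have key : ((2 * sinh (v / 2)) ^ 2)⁻¹ ≤ ((2 * sinh (a * v / 2)) ^ 2)⁻¹ * a * a := by
      have hrw : ((2 * sinh (a * v / 2)) ^ 2)⁻¹ * a * a = ((2 * sinh (a * v / 2) / a) ^ 2)⁻¹ := by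
        field_simp
      rw [hrw]
      exact inv_anti₀ (by positivity)
        (pow_le_pow_left₀ (by positivity) ((div_le_iff₀' ha₀).2 hsinh) 2)
    linarith

lemma concaveOn_log_q {s t : ℝ} (hst : s < t) (hts : t - s ≤ 1) :
    ConcaveOn ℝ (Ici 0) (fun v => log (q s t v)) := by
  have hsplit : (fun v => log (q s t v)) = fun v => -s * v + log (q 0 (t - s) v) := by
    funext v
    rw [q_eq_exp_mul_q_zero, log_mul (exp_pos _).ne' (q_pos (sub_pos.2 hst) v).ne', log_exp]
  rw [hsplit]
  exact ((LinearMap.mulLeft ℝ (-s)).concaveOn (convex_Ici 0)).add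
    (concaveOn_log_q_zero (sub_pos.2 hst) hts)

theorem q_convolution_ge_general (s t u : ℝ) (hst : s < t) (h1 : t - s < 1)
    (r : ℝ) (hr : r ∈ Set.Icc 0 u) :
    (t - s) * q s t u ≤ q s t r * q s t (u - r) := by
  have hlog := (concaveOn_log_q hst h1.le).map_add_map_le_of_mem_Icc self_mem_Ici
    (hr.1.trans hr.2) hr
  rwa [zero_add, q_zero, ← exp_le_exp, exp_add, exp_add, exp_log (sub_pos.2 hst),
    exp_log (q_pos hst u), exp_log (q_pos hst r), exp_log (q_pos hst (u - r))] at hlog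

theorem q_convolution_ge (s t u : ℝ) (hs : 0 ≤ s) (hst : s < t) (h1 : t - s < 1)
    (hu : 0 < u) (r : ℝ) (hr : r ∈ Set.Icc 0 u) :
    (t - s) * q s t u ≤ q s t r * q s t (u - r) :=
  q_convolution_ge_general s t u hst h1 r hr
end
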